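/- arXiv:2206.11086 — 2 statements merged into one kernel-verified Lean document; each statement's English description precedes it below -/
import Mathlib

section
/- In the setup (no conservation law needed), for every state ρ on A: √𝔉_{ρ⊗ρ_B}(X_A⊗1_B − U†(X_{A'}⊗1_{B'})U) ≤ Δ_{X_A} + Δ_{X_{A'}}. -/
open scoped Kronecker
open Matrix
open scoped ComplexOrder Classical

noncomputable section

/-- Positive semidefinite square root of a matrix (junk value `0` if not PSD). -/
noncomputable def matSqrt {n : Type*} [Fintype n] [DecidableEq n]
    (A : Matrix n n ℂ) : Matrix n n ℂ :=
  if h : A.PosSemidef then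
    (h.1.eigenvectorUnitary : Matrix n n ℂ) *
      Matrix.diagonal (fun i => ((Real.sqrt (h.1.eigenvalues i) : ℝ) : ℂ)) *
      star (h.1.eigenvectorUnitary : Matrix n n ℂ)
  else 0

/-- A quantum state: a positive semidefinite matrix of unit trace. -/
def IsState {n : Type*} [Fintype n] [DecidableEq n] (ρ : Matrix n n ℂ) : Prop :=
  ρ.PosSemidef ∧ ρ.trace = 1

/-- Fidelity `F(ρ,σ) = Tr √(√σ ρ √σ)`. -/
noncomputable def fidelity {n : Type*} [Fintype n] [DecidableEq n]
    (ρ σ : Matrix n n ℂ) : ℝ :=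
  ((matSqrt (matSqrt σ * ρ * matSqrt σ)).trace).re

/-- Purified distance `D_F(ρ,σ) = √(1 − F(ρ,σ)²)`. -/
noncomputable def purifiedDist {n : Type*} [Fintype n] [DecidableEq n]
    (ρ σ : Matrix n n ℂ) : ℝ :=
  Real.sqrt (1 - (fidelity ρ σ) ^ 2)

/-- SLD quantum Fisher information
`𝔉_ρ(X) = 2 ∑_{i,j : λ_i+λ_j>0} ((λ_i−λ_j)²/(λ_i+λ_j)) |⟨i|X|j⟩|²`
(junk value `0` if `ρ` is not Hermitian). -/
noncomputable def qFisher {n : Type*} [Fintype n] [DecidableEq n]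
    (ρ X : Matrix n n ℂ) : ℝ :=
  if hρ : ρ.IsHermitian then
    2 * ∑ i, ∑ j,
      (if 0 < hρ.eigenvalues i + hρ.eigenvalues j then
        ((hρ.eigenvalues i - hρ.eigenvalues j) ^ 2 / (hρ.eigenvalues i + hρ.eigenvalues j)) *
          Complex.normSq (dotProduct (star ⇑(hρ.eigenvectorBasis i))
            (X *ᵥ ⇑(hρ.eigenvectorBasis j)))
      else 0)
  else 0

/-- Positive part of a Hermitian matrix (junk value `0` if not Hermitian). -/
noncomputable def matPosPart {n : Type*} [Fintype n] [DecidableEq n]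
    (W : Matrix n n ℂ) : Matrix n n ℂ :=
  if hW : W.IsHermitian then
    (hW.eigenvectorUnitary : Matrix n n ℂ) *
      Matrix.diagonal (fun i => ((max (hW.eigenvalues i) 0 : ℝ) : ℂ)) *
      star (hW.eigenvectorUnitary : Matrix n n ℂ)
  else 0

/-- Negative part of a Hermitian matrix (junk value `0` if not Hermitian). -/
noncomputable def matNegPart {n : Type*} [Fintype n] [DecidableEq n]
    (W : Matrix n n ℂ) : Matrix n n ℂ :=
  if hW : W.IsHermitian then
    (hW.eigenvectorUnitary : Matrix n n ℂ) *
      Matrix.diagonal (fun i => ((max (-hW.eigenvalues i) 0 : ℝ) : ℂ)) *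
      star (hW.eigenvectorUnitary : Matrix n n ℂ)
  else 0

/-- `Δ_W`: difference between the largest and smallest eigenvalues of a Hermitian matrix. -/
noncomputable def specSpread {n : Type*} [Fintype n] [DecidableEq n]
    (W : Matrix n n ℂ) : ℝ :=
  if hW : W.IsHermitian then (⨆ i, hW.eigenvalues i) - (⨅ i, hW.eigenvalues i) else 0

/-- Trace distance `T(ρ,σ) = ½(Tr (ρ−σ)₊ + Tr (ρ−σ)₋)`. -/
noncomputable def traceDist {n : Type*} [Fintype n] [DecidableEq n]
    (ρ σ : Matrix n n ℂ) : ℝ :=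
  (((matPosPart (ρ - σ)).trace).re + ((matNegPart (ρ - σ)).trace).re) / 2

/-- The dual (adjoint w.r.t. the trace pairing) of a linear map on matrices:
`Tr[(dualMap Φ W) ρ] = Tr[W Φ(ρ)]` for all `ρ` whenever `Φ` is linear. -/
noncomputable def dualMap {n m : Type*} [Fintype n] [DecidableEq n] [Fintype m] [DecidableEq m]
    (Φ : Matrix n n ℂ → Matrix m m ℂ) (W : Matrix m m ℂ) : Matrix n n ℂ :=
  Matrix.of fun i j => (W * Φ (Matrix.single j i 1)).trace

/-- Partial trace over the second tensor factor. -/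
def ptraceRight {α β : Type*} [Fintype β] (M : Matrix (α × β) (α × β) ℂ) : Matrix α α ℂ :=
  Matrix.of fun i j => ∑ k, M (i, k) (j, k)

/-- Partial trace over the first tensor factor. -/
def ptraceLeft {α β : Type*} [Fintype α] (M : Matrix (α × β) (α × β) ℂ) : Matrix β β ℂ :=
  Matrix.of fun i j => ∑ k, M (k, i) (k, j)

/-- A quantum channel: a map admitting a Kraus representation `{K_μ}` with
`∑_μ K_μ† K_μ = 1` (this entails complete positivity, trace preservation and linearity). -/
def IsCPTP {n m : Type*} [Fintype n] [DecidableEq n] [Fintype m] [DecidableEq m]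
    (Φ : Matrix n n ℂ → Matrix m m ℂ) : Prop :=
  ∃ (N : ℕ) (K : Fin N → Matrix m n ℂ),
    (∀ ρ, Φ ρ = ∑ μ, K μ * ρ * (K μ)ᴴ) ∧ (∑ μ, (K μ)ᴴ * K μ = 1)

/-- Tensor extension `Φ ⊗ id` of a map on matrices (correct for linear `Φ`). -/
noncomputable def tensorId {a b r : Type*} [Fintype a] [DecidableEq a]
    [Fintype b] [DecidableEq b] [Fintype r]
    (Φ : Matrix a a ℂ → Matrix b b ℂ)
    (M : Matrix (a × r) (a × r) ℂ) : Matrix (b × r) (b × r) ℂ :=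
  Matrix.of fun p q => Φ (Matrix.of fun i j => M (i, p.2) (j, q.2)) p.1 q.1

/-- Operator norm (ℓ²→ℓ²) of a matrix, as a supremum over unit vectors. -/
noncomputable def opNorm {n : Type*} [Fintype n] (M : Matrix n n ℂ) : ℝ :=
  sSup {x : ℝ | ∃ v : n → ℂ, (∑ i, Complex.normSq (v i)) = 1 ∧
    x = Real.sqrt (∑ i, Complex.normSq ((M *ᵥ v) i))}

end

/-!
Let `λᵢ, |i⟩` be the spectral data of `ρ`. Each weight `(λᵢ - λⱼ)² / (λᵢ + λⱼ)` is at most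
`λᵢ + λⱼ`; with `|⟨i|X|j⟩| = |⟨j|X|i⟩|` and Parseval `∑ᵢ |⟨i|X|j⟩|² = ‖X|j⟩‖²` this gives
`𝔉_ρ(X) ≤ 4 ∑ⱼ λⱼ ‖X|j⟩‖²`, hence `𝔉_ρ(X) ≤ 4 r²` whenever `X² ≤ r²`. The diagonal of `X`
carries zero weight, so `𝔉_ρ` does not see a shift `X ↦ X - c`, and centring Loewner bounds
`a ≤ X ≤ b` gives `√𝔉_ρ(X) ≤ b - a`. Finally `X_A ⊗ 1 - U†(X_{A'} ⊗ 1)U` lies between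
`min X_A - max X_{A'}` and `max X_A - min X_{A'}`, because tensoring with the identity,
reindexing and unitary conjugation are monotone and fix scalars.
-/

open scoped MatrixOrder

section SpectralBounds

variable {A : Type*} [Ring A] [StarRing A] [PartialOrder A]
  [StarOrderedRing A] [Algebra ℝ A] [StarModule ℝ A]

theorem IsSelfAdjoint.of_algebraMap_le {a : A} {r : ℝ} (h : algebraMap ℝ A r ≤ a) :
    IsSelfAdjoint a := by
  simpa using (IsSelfAdjoint.of_nonneg (sub_nonneg.2 h)).add (IsSelfAdjoint.algebraMap A (.all r))

theorem sq_le_algebraMap_sq [TopologicalSpace A] [ContinuousFunctionalCalculus ℝ A IsSelfAdjoint]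
    [NonnegSpectrumClass ℝ A] {a : A} {r : ℝ} (hlo : algebraMap ℝ A (-r) ≤ a)
    (hhi : a ≤ algebraMap ℝ A r) : a ^ 2 ≤ algebraMap ℝ A (r ^ 2) := by
  have ha : IsSelfAdjoint a := .of_algebraMap_le hlo
  rw [algebraMap_le_iff_le_spectrum] at hlo
  rw [le_algebraMap_iff_spectrum_le] at hhi
  rw [← cfc_pow_id (R := ℝ) a 2, cfc_le_algebraMap_iff _ _ a]
  intro x hx
  nlinarith [hlo x hx, hhi x hx]

end SpectralBounds

namespace Matrix

variable {m n : Type*}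

theorem reindex_le_reindex (e : m ≃ n) {X Y : Matrix m m ℂ} (h : X ≤ Y) :
    reindex e e X ≤ reindex e e Y :=
  (le_iff.1 h).submatrix _

variable [Fintype m] [Fintype n]

theorem IsHermitian.algebraMap_iInf_eigenvalues_le [DecidableEq n] {X : Matrix n n ℂ}
    (hX : X.IsHermitian) : algebraMap ℝ _ (⨅ i, hX.eigenvalues i) ≤ X := by
  rw [algebraMap_le_iff_le_spectrum hX.isSelfAdjoint, hX.spectrum_real_eq_range_eigenvalues]
  rintro _ ⟨i, rfl⟩
  exact ciInf_le (Finite.bddBelow_range _) i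

theorem IsHermitian.le_algebraMap_iSup_eigenvalues [DecidableEq n] {X : Matrix n n ℂ}
    (hX : X.IsHermitian) : X ≤ algebraMap ℝ _ (⨆ i, hX.eigenvalues i) := by
  rw [le_algebraMap_iff_spectrum_le hX.isSelfAdjoint, hX.spectrum_real_eq_range_eigenvalues]
  rintro _ ⟨i, rfl⟩
  exact le_ciSup (Finite.bddAbove_range _) i

theorem IsHermitian.specSpread_eq [DecidableEq n] {X : Matrix n n ℂ} (hX : X.IsHermitian) :
    specSpread X = (⨆ i, hX.eigenvalues i) - ⨅ i, hX.eigenvalues i :=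
  dif_pos hX

theorem le_of_algebraMap_le_algebraMap [DecidableEq n] [Nonempty n] {a b : ℝ}
    (h : algebraMap ℝ (Matrix n n ℂ) a ≤ algebraMap ℝ _ b) : a ≤ b := by
  have hd := (le_iff.1 h).diag_nonneg (i := Classical.arbitrary n)
  simpa [Algebra.algebraMap_eq_smul_one] using hd

theorem kronecker_one_le_kronecker_one [DecidableEq n] {X Y : Matrix m m ℂ} (h : X ≤ Y) :
    X ⊗ₖ (1 : Matrix n n ℂ) ≤ Y ⊗ₖ 1 := by
  rw [le_iff, show Y ⊗ₖ (1 : Matrix n n ℂ) - X ⊗ₖ 1 = (Y - X) ⊗ₖ 1 by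
    rw [sub_eq_iff_eq_add, ← add_kronecker, sub_add_cancel]]
  exact h.kronecker PosSemidef.one

theorem algebraMap_kronecker_one [DecidableEq m] [DecidableEq n] (r : ℝ) :
    algebraMap ℝ (Matrix m m ℂ) r ⊗ₖ (1 : Matrix n n ℂ) = algebraMap ℝ _ r := by
  simp [Algebra.algebraMap_eq_smul_one, smul_kronecker]

theorem reindex_algebraMap [DecidableEq m] [DecidableEq n] (e : m ≃ n) (r : ℝ) :
    reindex e e (algebraMap ℝ (Matrix m m ℂ) r) = algebraMap ℝ _ r :=
  (reindexAlgEquiv ℝ ℂ e).commutes r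

theorem conjTranspose_mul_algebraMap_mul [DecidableEq n] {U : Matrix n n ℂ} (hU : Uᴴ * U = 1)
    (r : ℝ) : Uᴴ * algebraMap ℝ _ r * U = algebraMap ℝ _ r := by
  rw [← Algebra.commutes, mul_assoc, hU, mul_one]

theorem re_star_mulVec_dotProduct_mulVec_le [DecidableEq n] {X : Matrix n n ℂ} {c : ℝ}
    (hX : Xᴴ * X ≤ algebraMap ℝ _ c) (v : n → ℂ) :
    (star (X *ᵥ v) ⬝ᵥ (X *ᵥ v)).re ≤ c * (star v ⬝ᵥ v).re := by
  have h := (Complex.le_def.1 ((le_iff.1 hX).dotProduct_mulVec_nonneg v)).1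
  rw [Algebra.algebraMap_eq_smul_one, sub_mulVec, smul_mulVec, one_mulVec, ← mulVec_mulVec,
    dotProduct_sub, dotProduct_smul, dotProduct_mulVec, ← star_mulVec, Complex.sub_re] at h
  simpa [Complex.real_smul] using h

theorem star_dotProduct_eq_inner (u : EuclideanSpace ℂ n) (w : n → ℂ) :
    star ⇑u ⬝ᵥ w = inner ℂ u (WithLp.toLp 2 w) := by
  rw [EuclideanSpace.inner_eq_star_dotProduct, dotProduct_comm]

end Matrix

namespace OrthonormalBasis

variable {ι n : Type*} [Fintype ι] [Fintype n] (b : OrthonormalBasis ι ℂ (EuclideanSpace ℂ n))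

theorem star_dotProduct_apply [DecidableEq ι] (i j : ι) :
    star ⇑(b i) ⬝ᵥ ⇑(b j) = if i = j then 1 else 0 := by
  rw [Matrix.star_dotProduct_eq_inner]
  exact orthonormal_iff_ite.1 b.orthonormal i j

theorem sum_normSq_star_dotProduct (w : n → ℂ) :
    ∑ i, Complex.normSq (star ⇑(b i) ⬝ᵥ w) = (star w ⬝ᵥ w).re := by
  simp_rw [Matrix.star_dotProduct_eq_inner, Complex.normSq_eq_norm_sq, b.sum_sq_norm_inner_right]
  rw [← inner_self_eq_norm_sq (𝕜 := ℂ), ← Matrix.star_dotProduct_eq_inner]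
  rfl

end OrthonormalBasis

section Fisher

open Finset

variable {n : Type*} [Fintype n] [DecidableEq n]

theorem IsState.kronecker {m : Type*} [Fintype m] [DecidableEq m] {ρ : Matrix n n ℂ}
    {σ : Matrix m m ℂ} (hρ : IsState ρ) (hσ : IsState σ) : IsState (ρ ⊗ₖ σ) :=
  ⟨hρ.1.kronecker hσ.1, by rw [trace_kronecker, hρ.2, hσ.2, mul_one]⟩

theorem IsState.sum_eigenvalues {ρ : Matrix n n ℂ} (hρ : IsState ρ) :
    ∑ i, hρ.1.1.eigenvalues i = 1 := by
  have h := hρ.2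
  rw [hρ.1.1.trace_eq_sum_eigenvalues] at h
  simpa using congrArg Complex.re h

theorem IsState.nonempty {ρ : Matrix n n ℂ} (hρ : IsState ρ) : Nonempty n := by
  by_contra h
  rw [not_nonempty_iff] at h
  simpa [trace] using hρ.2

theorem qFisher_sub_algebraMap (ρ X : Matrix n n ℂ) (c : ℝ) :
    qFisher ρ (X - algebraMap ℝ _ c) = qFisher ρ X := by
  unfold qFisher
  split_ifs with hρ
  · congr 1
    refine sum_congr rfl fun i _ => sum_congr rfl fun j _ => ?_
    obtain rfl | hij := eq_or_ne i j
    · simp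
    · rw [sub_mulVec, dotProduct_sub, Algebra.algebraMap_eq_smul_one, smul_mulVec, one_mulVec,
        dotProduct_smul, hρ.eigenvectorBasis.star_dotProduct_apply, if_neg hij, smul_zero,
        sub_zero]
  · rfl

theorem qFisher_le {ρ X : Matrix n n ℂ} (hρ : IsState ρ) (hX : X.IsHermitian) {r : ℝ}
    (hXr : X ^ 2 ≤ algebraMap ℝ _ (r ^ 2)) : qFisher ρ X ≤ 4 * r ^ 2 := by
  unfold qFisher
  rw [dif_pos hρ.1.1]
  set lam := hρ.1.1.eigenvalues
  set e := hρ.1.1.eigenvectorBasis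
  set x : n → n → ℝ := fun i j => Complex.normSq (star ⇑(e i) ⬝ᵥ (X *ᵥ ⇑(e j)))
  have hlam : ∀ i, 0 ≤ lam i := hρ.1.eigenvalues_nonneg
  have hx_row : ∀ i, ∑ j, x i j = ∑ j, x j i := by
    refine fun i => sum_congr rfl fun j _ => ?_
    change Complex.normSq _ = Complex.normSq _
    rw [← Complex.normSq_conj, starRingEnd_apply, star_dotProduct, star_star,
      star_mulVec, hX.eq, ← dotProduct_mulVec]
  have hx_col : ∀ j, ∑ i, x i j ≤ r ^ 2 := by
    intro j
    have h := re_star_mulVec_dotProduct_mulVec_le (by rwa [hX.eq, ← sq]) ⇑(e j)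
    rwa [e.star_dotProduct_apply, if_pos rfl, Complex.one_re, mul_one,
      ← e.sum_normSq_star_dotProduct] at h
  calc 2 * ∑ i, ∑ j,
        (if 0 < lam i + lam j then (lam i - lam j) ^ 2 / (lam i + lam j) * x i j else 0)
      ≤ 2 * ∑ i, ∑ j, (lam i + lam j) * x i j := by
        gcongr with i _ j _
        split_ifs with h
        · refine mul_le_mul_of_nonneg_right ?_ (Complex.normSq_nonneg _)
          rw [div_le_iff₀ h]
          nlinarith [hlam i, hlam j]
        · exact mul_nonneg (add_nonneg (hlam i) (hlam j)) (Complex.normSq_nonneg _)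
    _ = 2 * (∑ i, lam i * ∑ j, x i j + ∑ j, lam j * ∑ i, x i j) := by
        simp only [add_mul, sum_add_distrib, mul_sum]
        rw [sum_comm (f := fun i j => lam j * x i j)]
    _ = 4 * ∑ j, lam j * ∑ i, x i j := by
        simp only [hx_row]
        ring
    _ ≤ 4 * ∑ j, lam j * r ^ 2 := by gcongr with j; exacts [hlam j, hx_col j]
    _ = 4 * r ^ 2 := by rw [← sum_mul, hρ.sum_eigenvalues, one_mul]

theorem sqrt_qFisher_le_sub {ρ X : Matrix n n ℂ} (hρ : IsState ρ) {a b : ℝ}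
    (ha : algebraMap ℝ _ a ≤ X) (hb : X ≤ algebraMap ℝ _ b) :
    Real.sqrt (qFisher ρ X) ≤ b - a := by
  set c := (a + b) / 2
  set r := (b - a) / 2
  have hX : (X - algebraMap ℝ _ c).IsHermitian :=
    (IsSelfAdjoint.of_algebraMap_le ha).sub (IsSelfAdjoint.algebraMap _ (.all c))
  have hsq : (X - algebraMap ℝ _ c) ^ 2 ≤ algebraMap ℝ _ (r ^ 2) := by
    refine sq_le_algebraMap_sq ?_ ?_
    · rwa [le_sub_iff_add_le, ← map_add, show -r + c = a by ring]
    · rwa [sub_le_iff_le_add, ← map_add, show r + c = b by ring]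
  have : Nonempty n := hρ.nonempty
  have hr : 0 ≤ r :=
    div_nonneg (sub_nonneg.2 (le_of_algebraMap_le_algebraMap (ha.trans hb))) zero_le_two
  rw [← qFisher_sub_algebraMap ρ X c]
  calc Real.sqrt (qFisher ρ (X - algebraMap ℝ _ c)) ≤ Real.sqrt ((2 * r) ^ 2) := by
        gcongr
        linarith [qFisher_le hρ hX hsq]
    _ = b - a := by rw [Real.sqrt_sq (by positivity)]; ring

end Fisher

/-- upper bound `Δ ≤ Δ_{X_A} + Δ_{X_{A'}}`. -/
theorem statement_7
    {dA dB dA' dB' : Type*} [Fintype dA] [DecidableEq dA] [Fintype dB] [DecidableEq dB]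
    [Fintype dA'] [DecidableEq dA'] [Fintype dB'] [DecidableEq dB']
    (e : dA × dB ≃ dA' × dB')
    (U : Matrix (dA × dB) (dA × dB) ℂ) (hU : U * Uᴴ = 1 ∧ Uᴴ * U = 1)
    (ρB : Matrix dB dB ℂ) (hρB : IsState ρB)
    (XA : Matrix dA dA ℂ) (hXA : XA.IsHermitian)
    (XA' : Matrix dA' dA' ℂ) (hXA' : XA'.IsHermitian)
    (ρ : Matrix dA dA ℂ) (hρ : IsState ρ) :
    Real.sqrt (qFisher (ρ ⊗ₖ ρB)
        (XA ⊗ₖ (1 : Matrix dB dB ℂ)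
          - Uᴴ * (Matrix.reindex e.symm e.symm (XA' ⊗ₖ (1 : Matrix dB' dB' ℂ))) * U))
      ≤ specSpread XA + specSpread XA' := by
  let Φ : Matrix dA' dA' ℂ → Matrix (dA × dB) (dA × dB) ℂ :=
    fun Y => Uᴴ * reindex e.symm e.symm (Y ⊗ₖ (1 : Matrix dB' dB' ℂ)) * U
  have hΦ_mono : Monotone Φ := fun _ _ h =>
    star_left_conjugate_le_conjugate
      (reindex_le_reindex e.symm (kronecker_one_le_kronecker_one h)) U
  have hΦ_alg (r : ℝ) : Φ (algebraMap ℝ _ r) = algebraMap ℝ _ r := by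
    simp only [Φ, algebraMap_kronecker_one, reindex_algebraMap,
      conjTranspose_mul_algebraMap_mul hU.2]
  have hK_lo := kronecker_one_le_kronecker_one (n := dB) hXA.algebraMap_iInf_eigenvalues_le
  have hK_hi := kronecker_one_le_kronecker_one (n := dB) hXA.le_algebraMap_iSup_eigenvalues
  have hL_lo := hΦ_mono hXA'.algebraMap_iInf_eigenvalues_le
  have hL_hi := hΦ_mono hXA'.le_algebraMap_iSup_eigenvalues
  rw [algebraMap_kronecker_one] at hK_lo hK_hi
  rw [hΦ_alg] at hL_lo hL_hi
  have hlo := sub_le_sub hK_lo hL_hi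
  have hhi := sub_le_sub hK_hi hL_lo
  rw [← map_sub] at hlo hhi
  refine (sqrt_qFisher_le_sub (hρ.kronecker hρB) hlo hhi).trans_eq ?_
  rw [hXA.specSpread_eq, hXA'.specSpread_eq]
  ring
end

section
/- Let {ρ_j}_{j∈J} and {σ_j}_{j∈J} be finite families of states on a finite-dimensional system S, let {q_j} be a probability distribution, and let {|j⟩}_{j∈J} be an orthonormal basis of an auxiliary system. Then D_F(∑_j q_j ρ_j⊗|j⟩⟨j|, ∑_j q_j σ_j⊗|j⟩⟨j|)² ≥ ∑_j q_j D_F(ρ_j, σ_j)². -/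
open scoped Kronecker
open Matrix
open scoped ComplexOrder Classical

/-!
Square roots of block-diagonal matrices `∑ⱼ Aⱼ ⊗ |j⟩⟨j|` are computed blockwise, so the fidelity
of the flagged states is `∑ⱼ qⱼ F(ρⱼ, σⱼ)` and the claim reduces to `(∑ⱼ qⱼ Fⱼ)² ≤ ∑ⱼ qⱼ Fⱼ²`,
convexity of `x ↦ x²`, provided `D_F(ρⱼ, σⱼ)² = 1 - Fⱼ²`, i.e. `Fⱼ ≤ 1`. For that, write
`F(ρ, σ) = Tr |√ρ √σ|` and `Tr |N| = Tr (V† N)` with `V` the partial isometry of the polar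
decomposition of `N`; the Cauchy–Schwarz inequality for the Hilbert–Schmidt inner product then
gives `F(ρ, σ) ≤ √(Tr ρ) √(Tr σ)`.
-/

section MatSqrt

open scoped MatrixOrder

variable {n : Type*} [Fintype n] [DecidableEq n]

lemma matSqrt_eq_cfcSqrt {A : Matrix n n ℂ} (hA : A.PosSemidef) : matSqrt A = CFC.sqrt A := by
  rw [matSqrt, dif_pos hA, CFC.sqrt_eq_cfc, cfc_nnreal_eq_real _ A, hA.1.cfc_eq,
    IsHermitian.cfc, Unitary.conjStarAlgAut_apply]
  congr 2
  exact congrArg diagonal (funext fun i => by simp [max_eq_left (hA.eigenvalues_nonneg i)])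

lemma posSemidef_matSqrt (A : Matrix n n ℂ) : (matSqrt A).PosSemidef := by
  by_cases hA : A.PosSemidef
  · rw [matSqrt_eq_cfcSqrt hA]
    exact Matrix.nonneg_iff_posSemidef.mp (CFC.sqrt_nonneg A)
  · rw [matSqrt, dif_neg hA]
    exact .zero

lemma matSqrt_mul_self {A : Matrix n n ℂ} (hA : A.PosSemidef) : matSqrt A * matSqrt A = A := by
  rw [matSqrt_eq_cfcSqrt hA]
  exact CFC.sqrt_mul_sqrt_self A hA.nonneg

lemma matSqrt_eq_of_mul_self_eq {A B : Matrix n n ℂ} (hB : B.PosSemidef) (h : B * B = A) :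
    matSqrt A = B := by
  have hA : A.PosSemidef := by
    simpa only [hB.1.eq, h] using posSemidef_conjTranspose_mul_self B
  rw [matSqrt_eq_cfcSqrt hA]
  exact CFC.sqrt_unique h hB.nonneg

lemma matSqrt_smul {A : Matrix n n ℂ} (hA : A.PosSemidef) {c : ℝ} (hc : 0 ≤ c) :
    matSqrt ((c : ℂ) • A) = (√c : ℂ) • matSqrt A := by
  refine matSqrt_eq_of_mul_self_eq ((posSemidef_matSqrt A).smul ?_) ?_
  · exact_mod_cast Real.sqrt_nonneg c
  · rw [smul_mul_smul_comm, matSqrt_mul_self hA, ← Complex.ofReal_mul, Real.mul_self_sqrt hc]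

lemma re_trace_matSqrt_nonneg (A : Matrix n n ℂ) : 0 ≤ (matSqrt A).trace.re :=
  (Complex.nonneg_iff.mp (posSemidef_matSqrt A).trace_nonneg).1

end MatSqrt

section TraceInequalities

variable {l n : Type*} [Fintype l] [Fintype n]

lemma re_trace_conjTranspose_mul_le (X Z : Matrix l n ℂ) :
    (Xᴴ * Z).trace.re ≤ √((Xᴴ * X).trace.re) * √((Zᴴ * Z).trace.re) := by
  let flat : Matrix l n ℂ → EuclideanSpace ℂ (l × n) := fun Y => WithLp.toLp 2 fun p => Y p.1 p.2
  have hinner : ∀ Y Y' : Matrix l n ℂ, (Yᴴ * Y').trace = inner ℂ (flat Y) (flat Y') := by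
    intro Y Y'
    simp only [flat, EuclideanSpace.inner_eq_star_dotProduct, Matrix.trace, diag, mul_apply,
      conjTranspose_apply, dotProduct, Fintype.sum_prod_type, Pi.star_apply]
    rw [Finset.sum_comm]
    simp_rw [mul_comm]
  simp only [hinner]
  simpa only [norm_eq_sqrt_re_inner (𝕜 := ℂ), RCLike.re_to_complex] using
    re_inner_le_norm (𝕜 := ℂ) (flat X) (flat Z)

lemma re_trace_mul_le_of_isStarProjection [DecidableEq n] {C P : Matrix n n ℂ}
    (hC : C.PosSemidef) (hP : IsStarProjection P) : (C * P).trace.re ≤ C.trace.re := by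
  have hQ := hP.one_sub
  have h := (hC.conjTranspose_mul_mul_same (1 - P)).trace_nonneg
  rw [← star_eq_conjTranspose, hQ.isSelfAdjoint.star_eq, trace_mul_cycle,
    hQ.isIdempotentElem.eq, sub_mul, one_mul, trace_sub, trace_mul_comm P] at h
  simpa using (Complex.nonneg_iff.mp h).1

end TraceInequalities

section PartialIsometry

variable {k n : Type*} [Fintype k] [Fintype n] [DecidableEq n]

lemma exists_isStarProjection_trace_matSqrt_eq (N : Matrix k n ℂ) :
    ∃ V : Matrix k n ℂ, IsStarProjection (V * Vᴴ) ∧ (matSqrt (Nᴴ * N)).trace = (Vᴴ * N).trace := by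
  have hM : (Nᴴ * N).PosSemidef := posSemidef_conjTranspose_mul_self N
  set U : Matrix n n ℂ := (hM.1.eigenvectorUnitary : Matrix n n ℂ)
  set d : n → ℂ := fun i => (√(hM.1.eigenvalues i) : ℂ)
  have hUU : Uᴴ * U = 1 := Unitary.coe_star_mul_self _
  have hdiag : star U * (Nᴴ * N) * U = diagonal (d * d) := by
    have h := hM.1.conjStarAlgAut_star_eigenvectorUnitary
    rw [Unitary.conjStarAlgAut_apply, Unitary.coe_star, star_star] at h
    rw [h]
    congr 1
    funext i
    simp [d, ← Complex.ofReal_mul, Real.mul_self_sqrt (hM.eigenvalues_nonneg i)]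
  have htrace : (matSqrt (Nᴴ * N)).trace = (diagonal d).trace := by
    rw [matSqrt, dif_pos hM, trace_mul_cycle, star_eq_conjTranspose, hUU, one_mul]
  -- The columns of `Y` are `N uᵢ / √λᵢ`, orthonormal on the support of `NᴴN` and zero off it
  -- (`0⁻¹ = 0`); `Y Uᴴ` is the partial isometry of the polar decomposition of `N`.
  obtain ⟨Y, hY⟩ : ∃ Y, Y = N * U * diagonal d⁻¹ := ⟨_, rfl⟩
  have hW : (N * U)ᴴ * (N * U) = diagonal (d * d) := by
    rw [← hdiag, conjTranspose_mul, star_eq_conjTranspose]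
    simp only [Matrix.mul_assoc]
  have hYN : Yᴴ * (N * U) = diagonal d := by
    rw [hY, conjTranspose_mul, diagonal_conjTranspose, Matrix.mul_assoc, hW, diagonal_mul_diagonal]
    congr 1
    funext i
    simp [d, ← mul_assoc]
  have hYY : Yᴴ * Y = diagonal (d * d⁻¹) := by
    rw [hY, ← Matrix.mul_assoc, ← hY, hYN, diagonal_mul_diagonal]
    rfl
  have hV : (Y * star U) * (Y * star U)ᴴ = Y * Yᴴ := by
    rw [conjTranspose_mul, star_eq_conjTranspose, conjTranspose_conjTranspose,
      Matrix.mul_assoc, ← Matrix.mul_assoc Uᴴ, hUU, Matrix.one_mul]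
  have hYdiag : Y * diagonal (d * d⁻¹) = Y := by
    rw [hY, Matrix.mul_assoc, diagonal_mul_diagonal]
    congr 2
    funext i
    simpa [mul_assoc] using mul_inv_mul_cancel (d i)⁻¹
  refine ⟨Y * star U, ⟨?_, ?_⟩, ?_⟩
  · rw [hV, IsIdempotentElem, ← Matrix.mul_assoc, Matrix.mul_assoc Y, hYY, hYdiag]
  · rw [hV]
    exact isHermitian_mul_conjTranspose_self Y
  · rw [htrace, ← hYN, conjTranspose_mul, star_eq_conjTranspose, conjTranspose_conjTranspose,
      Matrix.mul_assoc, trace_mul_comm U, Matrix.mul_assoc]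

end PartialIsometry

section Fidelity

variable {k l n : Type*} [Fintype k] [DecidableEq k] [Fintype l] [Fintype n] [DecidableEq n]

lemma re_trace_matSqrt_conjTranspose_mul_self_le (A : Matrix k l ℂ) (B : Matrix l n ℂ) :
    (matSqrt ((A * B)ᴴ * (A * B))).trace.re ≤ √((A * Aᴴ).trace.re) * √((Bᴴ * B).trace.re) := by
  obtain ⟨V, hV, htrace⟩ := exists_isStarProjection_trace_matSqrt_eq (A * B)
  have hAV : ((Aᴴ * V)ᴴ * (Aᴴ * V)).trace.re ≤ (A * Aᴴ).trace.re := by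
    rw [conjTranspose_mul, conjTranspose_conjTranspose, Matrix.mul_assoc, trace_mul_comm,
      Matrix.mul_assoc, Matrix.mul_assoc, ← Matrix.mul_assoc A]
    exact re_trace_mul_le_of_isStarProjection (posSemidef_self_mul_conjTranspose A) hV
  calc (matSqrt ((A * B)ᴴ * (A * B))).trace.re = ((Aᴴ * V)ᴴ * B).trace.re := by
        rw [htrace, conjTranspose_mul, conjTranspose_conjTranspose, Matrix.mul_assoc]
    _ ≤ √(((Aᴴ * V)ᴴ * (Aᴴ * V)).trace.re) * √((Bᴴ * B).trace.re) :=
        re_trace_conjTranspose_mul_le _ _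
    _ ≤ √((A * Aᴴ).trace.re) * √((Bᴴ * B).trace.re) := by gcongr

lemma posSemidef_matSqrt_mul_mul_matSqrt {ρ : Matrix n n ℂ} (hρ : ρ.PosSemidef)
    (σ : Matrix n n ℂ) : (matSqrt σ * ρ * matSqrt σ).PosSemidef := by
  simpa only [(posSemidef_matSqrt σ).1.eq] using hρ.conjTranspose_mul_mul_same (matSqrt σ)

lemma fidelity_nonneg (ρ σ : Matrix n n ℂ) : 0 ≤ fidelity ρ σ :=
  re_trace_matSqrt_nonneg _

lemma fidelity_le_sqrt_re_trace_mul_sqrt_re_trace {ρ σ : Matrix n n ℂ} (hρ : ρ.PosSemidef)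
    (hσ : σ.PosSemidef) : fidelity ρ σ ≤ √(ρ.trace.re) * √(σ.trace.re) := by
  have h := re_trace_matSqrt_conjTranspose_mul_self_le (matSqrt ρ) (matSqrt σ)
  rwa [conjTranspose_mul, (posSemidef_matSqrt ρ).1.eq, (posSemidef_matSqrt σ).1.eq,
    Matrix.mul_assoc, ← Matrix.mul_assoc (matSqrt ρ), matSqrt_mul_self hρ, matSqrt_mul_self hσ,
    ← Matrix.mul_assoc] at h

lemma purifiedDist_sq {ρ σ : Matrix n n ℂ} (hρ : IsState ρ) (hσ : IsState σ) :
    purifiedDist ρ σ ^ 2 = 1 - fidelity ρ σ ^ 2 := by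
  have h := fidelity_le_sqrt_re_trace_mul_sqrt_re_trace hρ.1 hσ.1
  rw [hρ.2, hσ.2, Complex.one_re, Real.sqrt_one, mul_one] at h
  rw [purifiedDist, Real.sq_sqrt]
  nlinarith [fidelity_nonneg ρ σ]

lemma fidelity_smul_smul {ρ σ : Matrix n n ℂ} (hρ : ρ.PosSemidef) (hσ : σ.PosSemidef) {c : ℝ}
    (hc : 0 ≤ c) : fidelity ((c : ℂ) • ρ) ((c : ℂ) • σ) = c * fidelity ρ σ := by
  have hscale : matSqrt ((c : ℂ) • σ) * ((c : ℂ) • ρ) * matSqrt ((c : ℂ) • σ)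
      = ((c ^ 2 : ℝ) : ℂ) • (matSqrt σ * ρ * matSqrt σ) := by
    rw [matSqrt_smul hσ hc, smul_mul_smul_comm, smul_mul_smul_comm]
    congr 1
    rw [← Complex.ofReal_mul, ← Complex.ofReal_mul, mul_comm, ← mul_assoc, Real.mul_self_sqrt hc,
      sq]
  rw [fidelity, fidelity, hscale,
    matSqrt_smul (posSemidef_matSqrt_mul_mul_matSqrt hρ σ) (sq_nonneg c), Real.sqrt_sq hc,
    trace_smul, smul_eq_mul, Complex.re_ofReal_mul]

end Fidelity

section BlockDiagonal

variable {d m J : Type*} [Fintype m] [DecidableEq J] {v : J → m → ℂ}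

lemma vecMulVec_mul_vecMulVec_of_orthonormal
    (hv : ∀ j j', star (v j) ⬝ᵥ v j' = if j = j' then 1 else 0) (j j' : J) :
    vecMulVec (v j) (star (v j)) * vecMulVec (v j') (star (v j'))
      = if j = j' then vecMulVec (v j) (star (v j)) else 0 := by
  rw [vecMulVec_mul_vecMulVec, hv]
  split_ifs with h
  · rw [h, one_smul]
  · rw [zero_smul, vecMulVec_zero]

variable [Fintype d] [Fintype J]

lemma sum_kronecker_mul_sum_kronecker
    (hv : ∀ j j', star (v j) ⬝ᵥ v j' = if j = j' then 1 else 0) (B C : J → Matrix d d ℂ) :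
    (∑ j, B j ⊗ₖ vecMulVec (v j) (star (v j))) * (∑ j, C j ⊗ₖ vecMulVec (v j) (star (v j)))
      = ∑ j, (B j * C j) ⊗ₖ vecMulVec (v j) (star (v j)) := by
  have hblock : ∀ j j', (B j ⊗ₖ vecMulVec (v j) (star (v j))) *
      (C j' ⊗ₖ vecMulVec (v j') (star (v j')))
        = if j = j' then (B j * C j) ⊗ₖ vecMulVec (v j) (star (v j)) else 0 := by
    intro j j'
    rw [← mul_kronecker_mul, vecMulVec_mul_vecMulVec_of_orthonormal hv]
    split_ifs with h
    · rw [h]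
    · rw [kronecker_zero]
  simp_rw [Finset.sum_mul_sum, hblock, Finset.sum_ite_eq, Finset.mem_univ, if_true]

variable [DecidableEq d] [DecidableEq m]

lemma matSqrt_sum_kronecker
    (hv : ∀ j j', star (v j) ⬝ᵥ v j' = if j = j' then 1 else 0) {A : J → Matrix d d ℂ}
    (hA : ∀ j, (A j).PosSemidef) :
    matSqrt (∑ j, A j ⊗ₖ vecMulVec (v j) (star (v j)))
      = ∑ j, matSqrt (A j) ⊗ₖ vecMulVec (v j) (star (v j)) := by
  refine matSqrt_eq_of_mul_self_eq (posSemidef_sum _ fun j _ =>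
    (posSemidef_matSqrt (A j)).kronecker (posSemidef_vecMulVec_self_star (v j))) ?_
  simp_rw [sum_kronecker_mul_sum_kronecker hv, matSqrt_mul_self (hA _)]

lemma fidelity_sum_kronecker
    (hv : ∀ j j', star (v j) ⬝ᵥ v j' = if j = j' then 1 else 0) {ρ σ : J → Matrix d d ℂ}
    (hρ : ∀ j, (ρ j).PosSemidef) (hσ : ∀ j, (σ j).PosSemidef) :
    fidelity (∑ j, ρ j ⊗ₖ vecMulVec (v j) (star (v j)))
        (∑ j, σ j ⊗ₖ vecMulVec (v j) (star (v j)))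
      = ∑ j, fidelity (ρ j) (σ j) := by
  rw [fidelity, matSqrt_sum_kronecker hv hσ, sum_kronecker_mul_sum_kronecker hv,
    sum_kronecker_mul_sum_kronecker hv,
    matSqrt_sum_kronecker hv fun j => posSemidef_matSqrt_mul_mul_matSqrt (hρ j) (σ j),
    trace_sum, Complex.re_sum]
  refine Finset.sum_congr rfl fun j _ => ?_
  rw [trace_kronecker, trace_vecMulVec, dotProduct_comm, hv, if_pos rfl, mul_one, fidelity]

end BlockDiagonal

theorem statement_13_general
    {dS m J : Type*} [Fintype dS] [DecidableEq dS] [Fintype m] [DecidableEq m]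
    [Fintype J] [DecidableEq J]
    (ρ σ : J → Matrix dS dS ℂ) (hρ : ∀ j, IsState (ρ j)) (hσ : ∀ j, IsState (σ j))
    (q : J → ℝ) (hq : ∀ j, 0 ≤ q j) (hqsum : ∑ j, q j = 1)
    (v : J → m → ℂ)
    (honb : ∀ j j', dotProduct (star (v j)) (v j') = if j = j' then 1 else 0) :
    (purifiedDist (∑ j, (q j : ℂ) • (ρ j ⊗ₖ Matrix.vecMulVec (v j) (star (v j))))
        (∑ j, (q j : ℂ) • (σ j ⊗ₖ Matrix.vecMulVec (v j) (star (v j))))) ^ 2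
      ≥ ∑ j, q j * (purifiedDist (ρ j) (σ j)) ^ 2 := by
  set F := fun j => fidelity (ρ j) (σ j)
  have hblock : fidelity (∑ j, (q j : ℂ) • (ρ j ⊗ₖ vecMulVec (v j) (star (v j))))
      (∑ j, (q j : ℂ) • (σ j ⊗ₖ vecMulVec (v j) (star (v j)))) = ∑ j, q j * F j := by
    have hqC : ∀ j, (0 : ℂ) ≤ q j := fun j => Complex.zero_le_real.mpr (hq j)
    simp_rw [← smul_kronecker]
    rw [fidelity_sum_kronecker honb (fun j => (hρ j).1.smul (hqC j))
      (fun j => (hσ j).1.smul (hqC j))]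
    exact Finset.sum_congr rfl fun j _ => fidelity_smul_smul (hρ j).1 (hσ j).1 (hq j)
  have hjensen : (∑ j, q j * F j) ^ 2 ≤ ∑ j, q j * F j ^ 2 :=
    (convexOn_pow 2).map_sum_le (fun j _ => hq j) hqsum fun j _ => fidelity_nonneg _ _
  rw [ge_iff_le, purifiedDist, Real.sq_sqrt', hblock]
  calc ∑ j, q j * purifiedDist (ρ j) (σ j) ^ 2 = 1 - ∑ j, q j * F j ^ 2 := by
        simp_rw [purifiedDist_sq (hρ _) (hσ _), mul_sub, mul_one, Finset.sum_sub_distrib, hqsum]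
        rfl
    _ ≤ 1 - (∑ j, q j * F j) ^ 2 := by linarith
    _ ≤ max (1 - (∑ j, q j * F j) ^ 2) 0 := le_max_left _ _

/-- purified distance of block-diagonal (classically flagged) states. -/
theorem statement_13
    {dS m J : Type*} [Fintype dS] [DecidableEq dS] [Fintype m] [DecidableEq m]
    [Fintype J] [DecidableEq J]
    (ρ σ : J → Matrix dS dS ℂ) (hρ : ∀ j, IsState (ρ j)) (hσ : ∀ j, IsState (σ j))
    (q : J → ℝ) (hq : ∀ j, 0 ≤ q j) (hqsum : ∑ j, q j = 1)
    (v : J → m → ℂ)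
    (honb : ∀ j j', dotProduct (star (v j)) (v j') = if j = j' then 1 else 0)
    (hbasis : Fintype.card m = Fintype.card J) :
    (purifiedDist (∑ j, (q j : ℂ) • (ρ j ⊗ₖ Matrix.vecMulVec (v j) (star (v j))))
        (∑ j, (q j : ℂ) • (σ j ⊗ₖ Matrix.vecMulVec (v j) (star (v j))))) ^ 2
      ≥ ∑ j, q j * (purifiedDist (ρ j) (σ j)) ^ 2 :=
  statement_13_general ρ σ hρ hσ q hq hqsum v honb
end
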